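/- arXiv:2009.01393 — 7 statements merged into one kernel-verified Lean document; each statement's English description precedes it below -/
import Mathlib

section
/- Let n be a positive integer, let A, B, C be real n×n matrices, and let δ > 0. Assume that the 2n×2n block matrix M₀ = [[A, B], [Bᵀ, C]] (Matrix.fromBlocks A B Bᵀ C) is symmetric and positive semidefinite, and that A is positive definite. Then the stabilized matrix M_δ = [[A, B], [Bᵀ, C + δ·I]] (Matrix.fromBlocks A B Bᵀ (C + δ•1)) is positive definite. -/
open Matrix

open scoped ComplexOrder

/-! By the Schur complement criterion, `M₀ ⪰ 0` with `A ≻ 0` gives `C - Bᵀ A⁻¹ B ⪰ 0`, so the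
Schur complement `C + δ I - Bᵀ A⁻¹ B` of `M_δ` is positive definite. The same criterion makes
`M_δ` positive semidefinite, and its determinant `det A · det (C + δ I - Bᵀ A⁻¹ B)` is nonzero;
a positive semidefinite invertible matrix is positive definite. -/

namespace Matrix

variable {𝕜 m n : Type*} [RCLike 𝕜] [Fintype m] [Fintype n] [DecidableEq m] [DecidableEq n]

theorem PosDef.fromBlocks₁₁_of_schur_complement {A : Matrix m m 𝕜} (B : Matrix m n 𝕜)
    {D : Matrix n n 𝕜} (hA : A.PosDef) (hS : (D - Bᴴ * A⁻¹ * B).PosDef) :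
    (fromBlocks A B Bᴴ D).PosDef := by
  let _ := hA.isUnit.invertible
  have hM : (fromBlocks A B Bᴴ D).PosSemidef :=
    (PosDef.fromBlocks₁₁ B D hA).mpr hS.posSemidef
  rw [hM.posDef_iff_det_ne_zero, det_fromBlocks₁₁, invOf_eq_nonsing_inv]
  exact mul_ne_zero hA.det_pos.ne' hS.det_pos.ne'

theorem PosSemidef.fromBlocks_add₂₂_posDef {A : Matrix m m 𝕜} {B : Matrix m n 𝕜}
    {D E : Matrix n n 𝕜} (hM : (fromBlocks A B Bᴴ D).PosSemidef) (hA : A.PosDef)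
    (hE : E.PosDef) : (fromBlocks A B Bᴴ (D + E)).PosDef := by
  let _ := hA.isUnit.invertible
  have hS : (D - Bᴴ * A⁻¹ * B).PosSemidef := (PosDef.fromBlocks₁₁ B D hA).mp hM
  refine hA.fromBlocks₁₁_of_schur_complement B ?_
  rw [add_sub_right_comm]
  exact PosDef.posSemidef_add hS hE

end Matrix

theorem stabilized_block_matrix_posDef_general
    (n : ℕ) (A B C : Matrix (Fin n) (Fin n) ℝ) (δ : ℝ) (hδ : 0 < δ)
    (hM₀ : (Matrix.fromBlocks A B Bᵀ C).PosSemidef) (hA : A.PosDef) :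
    (Matrix.fromBlocks A B Bᵀ (C + δ • (1 : Matrix (Fin n) (Fin n) ℝ))).PosDef := by
  rw [← conjTranspose_eq_transpose_of_trivial] at hM₀ ⊢
  exact hM₀.fromBlocks_add₂₂_posDef hA (PosDef.one.smul hδ)

/-- **Lemma 3.2 (abstract form).** If the block matrix `M₀ = [[A, B], [Bᵀ, C]]` is
symmetric positive semidefinite and `A` is positive definite, then for every `δ > 0`
the stabilized matrix `M_δ = [[A, B], [Bᵀ, C + δ·I]]` is positive definite. -/
theorem stabilized_block_matrix_posDef
    (n : ℕ) (hn : 0 < n) (A B C : Matrix (Fin n) (Fin n) ℝ) (δ : ℝ) (hδ : 0 < δ)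
    (hM₀ : (Matrix.fromBlocks A B Bᵀ C).PosSemidef) (hA : A.PosDef) :
    (Matrix.fromBlocks A B Bᵀ (C + δ • (1 : Matrix (Fin n) (Fin n) ℝ))).PosDef :=
  stabilized_block_matrix_posDef_general n A B C δ hδ hM₀ hA
end

section
/- Let n be a positive integer, ξ > 0 and δ > 0 real numbers, E : ℝ^(n⊕n) → ℝ a differentiable function with gradient ∇E, and let A, B, C : ℝ → (real n×n matrices) be matrix-valued functions of time such that for every t the block matrix M₀(t) = [[A(t), B(t)], [B(t)ᵀ, C(t)]] is symmetric positive semidefinite and A(t) is positive definite; set M_δ(t) = [[A(t), B(t)], [B(t)ᵀ, C(t) + δ·I]]. Let y : ℝ → ℝ^(n⊕n) be differentiable and satisfy the moving finite element system ξ • M_δ(t).mulVec(y'(t)) = -∇E(y(t)) for all t. Then for every t the function E ∘ y has derivative -ξ·⟨M_δ(t) y'(t), y'(t)⟩ at t, this derivative is ≤ 0, and it equals 0 only when y'(t) = 0. -/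
/-!
By the chain rule and the scheme, `d/dt E(y) = ⟪∇E(y), y'⟫ = -ξ ⟨M_δ y', y'⟩`, so everything
rests on `M_δ` being positive definite. Its quadratic form is that of `M₀` plus `δ |v₂|²`:
this is positive when `v₂ ≠ 0`, and when `v₂ = 0` it reduces to `⟨A v₁, v₁⟩ > 0`.
-/

open Matrix

theorem HasGradientAt.comp_hasDerivAt {F : Type*} [NormedAddCommGroup F] [InnerProductSpace ℝ F]
    [CompleteSpace F] {f : F → ℝ} {g : F} {γ : ℝ → F} {γ' : F} {t : ℝ}
    (hf : HasGradientAt f g (γ t)) (hγ : HasDerivAt γ γ' t) :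
    HasDerivAt (f ∘ γ) (inner ℝ g γ') t := by
  simpa using hf.hasFDerivAt.comp_hasDerivAt t hγ

theorem HasGradientAt.hasDerivAt_comp_of_smul_mulVec_eq_neg {ι : Type*} [Fintype ι]
    {f : EuclideanSpace ℝ ι → ℝ} {g γ' : EuclideanSpace ℝ ι} {γ : ℝ → EuclideanSpace ℝ ι}
    {t ξ : ℝ} {M : Matrix ι ι ℝ} (hf : HasGradientAt f g (γ t)) (hγ : HasDerivAt γ γ' t)
    (hflow : ξ • M *ᵥ γ'.ofLp = -g.ofLp) :
    HasDerivAt (f ∘ γ) (-(ξ * (M *ᵥ γ'.ofLp ⬝ᵥ γ'.ofLp))) t := by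
  convert hf.comp_hasDerivAt hγ using 1
  rw [EuclideanSpace.inner_eq_star_dotProduct, star_trivial, ← neg_neg g.ofLp, ← hflow]
  simp only [dotProduct_comm, dotProduct_neg, dotProduct_smul, smul_eq_mul]

namespace Matrix

variable {m o : Type*} [Fintype m] [Fintype o] [DecidableEq o]

theorem dotProduct_fromBlocks_add_smul_one_mulVec (A : Matrix m m ℝ) (B : Matrix m o ℝ)
    (C : Matrix o o ℝ) (δ : ℝ) (x : m ⊕ o → ℝ) :
    x ⬝ᵥ fromBlocks A B Bᵀ (C + δ • 1) *ᵥ x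
      = x ⬝ᵥ fromBlocks A B Bᵀ C *ᵥ x + δ * (x ∘ Sum.inr ⬝ᵥ x ∘ Sum.inr) := by
  rw [← Sum.elim_comp_inl_inr x]
  simp only [fromBlocks_mulVec, sumElim_dotProduct_sumElim, add_mulVec, smul_mulVec, one_mulVec,
    dotProduct_add, dotProduct_smul, smul_eq_mul, Sum.elim_comp_inr]
  ring

theorem PosDef.fromBlocks_add_smul_one {A : Matrix m m ℝ} {B : Matrix m o ℝ}
    {C : Matrix o o ℝ} {δ : ℝ} (hA : A.PosDef) (hM : (fromBlocks A B Bᵀ C).PosSemidef)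
    (hδ : 0 < δ) : (fromBlocks A B Bᵀ (C + δ • 1)).PosDef := by
  obtain ⟨-, hB, -, hC⟩ := isHermitian_fromBlocks_iff.1 hM.isHermitian
  refine .of_dotProduct_mulVec_pos
    (hA.isHermitian.fromBlocks hB (hC.add (isHermitian_one.smul rfl))) fun x hx => ?_
  rw [star_trivial, dotProduct_fromBlocks_add_smul_one_mulVec]
  by_cases h₂ : x ∘ Sum.inr = 0
  · have h₁ : x ∘ Sum.inl ≠ 0 := by
      contrapose! hx
      rw [← Sum.elim_comp_inl_inr x, hx, h₂]
      ext (i | i) <;> rfl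
    rw [← Sum.elim_comp_inl_inr x, h₂, fromBlocks_mulVec, sumElim_dotProduct_sumElim]
    simpa using hA.dotProduct_mulVec_pos h₁
  · have hM₀ := hM.dotProduct_mulVec_nonneg x
    have hx₂ := dotProduct_self_star_pos_iff.2 h₂
    rw [star_trivial] at hM₀ hx₂
    positivity

end Matrix

theorem mfem_energy_dissipation_general
    (n : ℕ) (ξ δ : ℝ) (hξ : 0 < ξ) (hδ : 0 < δ)
    (E : EuclideanSpace ℝ (Fin n ⊕ Fin n) → ℝ)
    (gradE : EuclideanSpace ℝ (Fin n ⊕ Fin n) → EuclideanSpace ℝ (Fin n ⊕ Fin n))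
    (hE : ∀ x, HasGradientAt E (gradE x) x)
    (A B C : ℝ → Matrix (Fin n) (Fin n) ℝ)
    (hM₀ : ∀ t, (Matrix.fromBlocks (A t) (B t) (B t)ᵀ (C t)).PosSemidef)
    (hA : ∀ t, (A t).PosDef)
    (y : ℝ → EuclideanSpace ℝ (Fin n ⊕ Fin n)) (hy : Differentiable ℝ y)
    (hODE : ∀ t, ξ • (Matrix.fromBlocks (A t) (B t) (B t)ᵀ
        (C t + δ • (1 : Matrix (Fin n) (Fin n) ℝ))).mulVec (WithLp.ofLp (deriv y t)) = -(WithLp.ofLp (gradE (y t)))) :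
    ∀ t : ℝ,
      HasDerivAt (fun s => E (y s))
        (-(ξ * ((Matrix.fromBlocks (A t) (B t) (B t)ᵀ
            (C t + δ • (1 : Matrix (Fin n) (Fin n) ℝ))).mulVec (WithLp.ofLp (deriv y t)) ⬝ᵥ WithLp.ofLp (deriv y t)))) t ∧
      -(ξ * ((Matrix.fromBlocks (A t) (B t) (B t)ᵀ
          (C t + δ • (1 : Matrix (Fin n) (Fin n) ℝ))).mulVec (WithLp.ofLp (deriv y t)) ⬝ᵥ WithLp.ofLp (deriv y t))) ≤ 0 ∧
      (-(ξ * ((Matrix.fromBlocks (A t) (B t) (B t)ᵀ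
          (C t + δ • (1 : Matrix (Fin n) (Fin n) ℝ))).mulVec (WithLp.ofLp (deriv y t)) ⬝ᵥ WithLp.ofLp (deriv y t))) = 0 →
        deriv y t = 0) := by
  intro t
  have hM := (hA t).fromBlocks_add_smul_one (hM₀ t) hδ
  have hquad := hM.dotProduct_mulVec_pos (x := (deriv y t).ofLp)
  have hquad₀ := hM.posSemidef.dotProduct_mulVec_nonneg (deriv y t).ofLp
  rw [star_trivial, dotProduct_comm] at hquad hquad₀
  refine ⟨(hE _).hasDerivAt_comp_of_smul_mulVec_eq_neg (hy t).hasDerivAt (hODE t),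
    neg_nonpos.2 (mul_nonneg hξ.le hquad₀), fun hzero => ?_⟩
  by_contra hne
  have := mul_pos hξ (hquad ((WithLp.ofLp_eq_zero 2).not.2 hne))
  linarith

/-- **Theorem 4.1.** The semi-discrete moving finite element scheme
`ξ • M_δ(t) y'(t) = -∇E(y(t))`, where `M_δ(t) = [[A(t), B(t)], [B(t)ᵀ, C(t) + δ·I]]`
is the stabilized dissipation matrix (`M₀(t)` symmetric positive semidefinite, `A(t)`
positive definite), preserves the energy dissipation structure: `t ↦ E(y(t))` has
derivative `-ξ·⟨M_δ(t) y'(t), y'(t)⟩ ≤ 0`, with equality to `0` only when `y'(t) = 0`. -/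
theorem mfem_energy_dissipation
    (n : ℕ) (hn : 0 < n) (ξ δ : ℝ) (hξ : 0 < ξ) (hδ : 0 < δ)
    (E : EuclideanSpace ℝ (Fin n ⊕ Fin n) → ℝ)
    (gradE : EuclideanSpace ℝ (Fin n ⊕ Fin n) → EuclideanSpace ℝ (Fin n ⊕ Fin n))
    (hE : ∀ x, HasGradientAt E (gradE x) x)
    (A B C : ℝ → Matrix (Fin n) (Fin n) ℝ)
    (hM₀ : ∀ t, (Matrix.fromBlocks (A t) (B t) (B t)ᵀ (C t)).PosSemidef)
    (hA : ∀ t, (A t).PosDef)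
    (y : ℝ → EuclideanSpace ℝ (Fin n ⊕ Fin n)) (hy : Differentiable ℝ y)
    (hODE : ∀ t, ξ • (Matrix.fromBlocks (A t) (B t) (B t)ᵀ
        (C t + δ • (1 : Matrix (Fin n) (Fin n) ℝ))).mulVec (WithLp.ofLp (deriv y t)) = -(WithLp.ofLp (gradE (y t)))) :
    ∀ t : ℝ,
      HasDerivAt (fun s => E (y s))
        (-(ξ * ((Matrix.fromBlocks (A t) (B t) (B t)ᵀ
            (C t + δ • (1 : Matrix (Fin n) (Fin n) ℝ))).mulVec (WithLp.ofLp (deriv y t)) ⬝ᵥ WithLp.ofLp (deriv y t)))) t ∧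
      -(ξ * ((Matrix.fromBlocks (A t) (B t) (B t)ᵀ
          (C t + δ • (1 : Matrix (Fin n) (Fin n) ℝ))).mulVec (WithLp.ofLp (deriv y t)) ⬝ᵥ WithLp.ofLp (deriv y t))) ≤ 0 ∧
      (-(ξ * ((Matrix.fromBlocks (A t) (B t) (B t)ᵀ
          (C t + δ • (1 : Matrix (Fin n) (Fin n) ℝ))).mulVec (WithLp.ofLp (deriv y t)) ⬝ᵥ WithLp.ofLp (deriv y t))) = 0 →
        deriv y t = 0) :=
  mfem_energy_dissipation_general n ξ δ hξ hδ E gradE hE A B C hM₀ hA y hy hODE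
end

section
/- Let a < b, α > 0, L0 ≥ 0, c0 ≥ 0, c1 > 0 be real numbers with α - L0·c0² ≥ c1. Let F, f : ℝ → ℝ → ℝ be continuous with ∀ x s, HasDerivAt (F x) (f x s) s, and |f x s - f x t| ≤ L0·|s - t| for all x, s, t. Let u, v : ℝ → ℝ be continuously differentiable on [a,b], set w = v - u, and define the energy E(φ) = ∫_a^b (α/2·φ'(x)² + F(x, φ(x))) dx. Assume the Poincaré inequality ∫_a^b w(x)² dx ≤ c0²·∫_a^b w'(x)² dx and the Euler–Lagrange relation ∫_a^b (α·u'(x)·w'(x) + f(x, u(x))·w(x)) dx = 0. Then E(v) - E(u) ≥ (c1/2)·∫_a^b w'(x)² dx. -/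
/-!
Write `w = v - u`. Since `s ↦ F x s` has an `L0`-Lipschitz derivative, it lies above its tangent
parabola with curvature `-L0`, so pointwise the energy density of `v` exceeds that of `u` by at
least `α/2·w'² + (α u' w' + f(x,u) w) - L0/2·w²`. Integrating, the middle term vanishes by the
Euler–Lagrange relation and the Poincaré inequality turns `L0/2·∫ w²` into `L0 c0²/2·∫ w'²`.
-/

open Set MeasureTheory

lemma apply_le_of_hasDerivAt_sign {φ φ' : ℝ → ℝ} {t : ℝ} (hφ : ∀ r, HasDerivAt φ (φ' r) r)
    (hleft : ∀ r < t, φ' r ≤ 0) (hright : ∀ r, t < r → 0 ≤ φ' r) (s : ℝ) : φ t ≤ φ s := by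
  have hcont : Continuous φ := continuous_iff_continuousAt.2 fun r => (hφ r).continuousAt
  rcases le_total t s with hts | hst
  · have hmono : MonotoneOn φ (Ici t) :=
      monotoneOn_of_hasDerivWithinAt_nonneg (convex_Ici t) hcont.continuousOn
        (fun r _ => (hφ r).hasDerivWithinAt) (by simpa using hright)
    exact hmono self_mem_Ici hts hts
  · have hanti : AntitoneOn φ (Iic t) :=
      antitoneOn_of_hasDerivWithinAt_nonpos (convex_Iic t) hcont.continuousOn
        (fun r _ => (hφ r).hasDerivWithinAt) (by simpa using hleft)
    exact hanti hst self_mem_Iic hst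

lemma add_deriv_mul_sub_le_of_lipschitz_deriv {G g : ℝ → ℝ} {L : ℝ}
    (hG : ∀ s, HasDerivAt G (g s) s) (hLip : ∀ s t, |g s - g t| ≤ L * |s - t|) (s t : ℝ) :
    G t + g t * (s - t) - L / 2 * (s - t) ^ 2 ≤ G s := by
  set φ : ℝ → ℝ := fun r => G r - g t * r + L / 2 * (r - t) ^ 2
  have hφ : ∀ r, HasDerivAt φ (g r - g t + L * (r - t)) r := fun r =>
    ((hG r).sub ((hasDerivAt_id' r).const_mul (g t))).add
      ((((hasDerivAt_id' r).sub_const t).pow 2).const_mul (L / 2)) |>.congr_deriv (by ring)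
  have hmin : φ t ≤ φ s := by
    refine apply_le_of_hasDerivAt_sign hφ (fun r hr => ?_) (fun r hr => ?_) s
    · have h := hLip r t
      rw [abs_of_neg (sub_neg.2 hr)] at h
      linarith [le_abs_self (g r - g t)]
    · have h := hLip r t
      rw [abs_of_pos (sub_pos.2 hr)] at h
      linarith [neg_abs_le (g r - g t)]
  simp only [φ, sub_self] at hmin
  linear_combination hmin

lemma ContinuousOn.uncurry_apply {X Y Z : Type*} [TopologicalSpace X] [TopologicalSpace Y]
    [TopologicalSpace Z] {F : X → Y → Z} {v : X → Y} {S : Set X} (hv : ContinuousOn v S)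
    (hF : Continuous (Function.uncurry F)) : ContinuousOn (fun x => F x (v x)) S :=
  hF.comp_continuousOn (continuousOn_id.prodMk hv)

lemma energy_sub_ge_of_lipschitz_deriv {a b α L : ℝ} (hab : a ≤ b) {F f : ℝ → ℝ → ℝ}
    (hF : Continuous (Function.uncurry F)) (hf : Continuous (Function.uncurry f))
    (hFf : ∀ x s, HasDerivAt (F x) (f x s) s) (hLip : ∀ x s t, |f x s - f x t| ≤ L * |s - t|)
    {u v u' v' : ℝ → ℝ} (hu : ContinuousOn u (Icc a b)) (hv : ContinuousOn v (Icc a b))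
    (hu' : ContinuousOn u' (Icc a b)) (hv' : ContinuousOn v' (Icc a b)) :
    α / 2 * (∫ x in a..b, (v' x - u' x) ^ 2)
        + (∫ x in a..b, (α * u' x * (v' x - u' x) + f x (u x) * (v x - u x)))
        - L / 2 * (∫ x in a..b, (v x - u x) ^ 2)
      ≤ (∫ x in a..b, (α / 2 * (v' x) ^ 2 + F x (v x)))
        - (∫ x in a..b, (α / 2 * (u' x) ^ 2 + F x (u x))) := by
  have hFu := hu.uncurry_apply hF
  have hFv := hv.uncurry_apply hF
  have hfu := hu.uncurry_apply hf
  have hint : ∀ {g : ℝ → ℝ}, ContinuousOn g (Icc a b) → IntervalIntegrable g volume a b :=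
    fun hg => hg.intervalIntegrable_of_Icc hab
  have hw'sq : IntervalIntegrable (fun x => (v' x - u' x) ^ 2) volume a b := hint (by fun_prop)
  have hwsq : IntervalIntegrable (fun x => (v x - u x) ^ 2) volume a b := hint (by fun_prop)
  have hEL : IntervalIntegrable (fun x => α * u' x * (v' x - u' x) + f x (u x) * (v x - u x))
      volume a b := hint (by fun_prop)
  have hEv : IntervalIntegrable (fun x => α / 2 * (v' x) ^ 2 + F x (v x)) volume a b :=
    hint (by fun_prop)
  have hEu : IntervalIntegrable (fun x => α / 2 * (u' x) ^ 2 + F x (u x)) volume a b :=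
    hint (by fun_prop)
  rw [← intervalIntegral.integral_const_mul, ← intervalIntegral.integral_const_mul,
    ← intervalIntegral.integral_add (hw'sq.const_mul _) hEL,
    ← intervalIntegral.integral_sub ((hw'sq.const_mul _).add hEL) (hwsq.const_mul _),
    ← intervalIntegral.integral_sub hEv hEu]
  refine intervalIntegral.integral_mono_on hab (hint (by fun_prop)) (hEv.sub hEu) fun x _ => ?_
  have htangent := add_deriv_mul_sub_le_of_lipschitz_deriv (hFf x) (hLip x) (v x) (u x)
  linear_combination htangent

theorem energy_excess_lower_bound_general
    (a b α L0 c0 c1 : ℝ) (hab : a < b) (hL0 : 0 ≤ L0)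
    (hH1 : c1 ≤ α - L0 * c0 ^ 2)
    (F f : ℝ → ℝ → ℝ)
    (hF : Continuous (Function.uncurry F)) (hf : Continuous (Function.uncurry f))
    (hFf : ∀ x s, HasDerivAt (F x) (f x s) s)
    (hLip : ∀ x s t, |f x s - f x t| ≤ L0 * |s - t|)
    (u v u' v' : ℝ → ℝ)
    (hu : ∀ x ∈ Set.Icc a b, HasDerivWithinAt u (u' x) (Set.Icc a b) x)
    (hu' : ContinuousOn u' (Set.Icc a b))
    (hv : ∀ x ∈ Set.Icc a b, HasDerivWithinAt v (v' x) (Set.Icc a b) x)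
    (hv' : ContinuousOn v' (Set.Icc a b))
    (hPoincare : ∫ x in a..b, (v x - u x) ^ 2 ≤ c0 ^ 2 * ∫ x in a..b, (v' x - u' x) ^ 2)
    (hEL : (∫ x in a..b, (α * u' x * (v' x - u' x) + f x (u x) * (v x - u x))) = 0) :
    (∫ x in a..b, (α / 2 * (v' x) ^ 2 + F x (v x)))
        - (∫ x in a..b, (α / 2 * (u' x) ^ 2 + F x (u x)))
      ≥ c1 / 2 * ∫ x in a..b, (v' x - u' x) ^ 2 := by
  have hexcess := energy_sub_ge_of_lipschitz_deriv (α := α) hab.le hF hf hFf hLip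
    (HasDerivWithinAt.continuousOn hu) (HasDerivWithinAt.continuousOn hv) hu' hv'
  rw [hEL, add_zero] at hexcess
  have hw'sq : 0 ≤ ∫ x in a..b, (v' x - u' x) ^ 2 :=
    intervalIntegral.integral_nonneg hab.le fun x _ => sq_nonneg _
  linarith [mul_le_mul_of_nonneg_left hPoincare hL0, mul_le_mul_of_nonneg_right hH1 hw'sq]

/-- **Lower bound (4.10) in the proof of Theorem 4.3.** Under assumption (H1)
(`α - L₀c₀² ≥ c₁ > 0`), if `u` satisfies the Euler–Lagrange relation of the energy
`E(φ) = ∫_a^b (α/2·(φ')² + F(x,φ)) dx` tested against `w = v - u`, and `w` satisfies the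
Poincaré inequality with constant `c₀`, then
`E(v) - E(u) ≥ (c₁/2)·∫_a^b (w')² dx`. -/
theorem energy_excess_lower_bound
    (a b α L0 c0 c1 : ℝ) (hab : a < b) (hα : 0 < α) (hL0 : 0 ≤ L0) (hc0 : 0 ≤ c0)
    (hc1 : 0 < c1) (hH1 : c1 ≤ α - L0 * c0 ^ 2)
    (F f : ℝ → ℝ → ℝ)
    (hF : Continuous (Function.uncurry F)) (hf : Continuous (Function.uncurry f))
    (hFf : ∀ x s, HasDerivAt (F x) (f x s) s)
    (hLip : ∀ x s t, |f x s - f x t| ≤ L0 * |s - t|)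
    (u v u' v' : ℝ → ℝ)
    (hu : ∀ x ∈ Set.Icc a b, HasDerivWithinAt u (u' x) (Set.Icc a b) x)
    (hu' : ContinuousOn u' (Set.Icc a b))
    (hv : ∀ x ∈ Set.Icc a b, HasDerivWithinAt v (v' x) (Set.Icc a b) x)
    (hv' : ContinuousOn v' (Set.Icc a b))
    (hPoincare : ∫ x in a..b, (v x - u x) ^ 2 ≤ c0 ^ 2 * ∫ x in a..b, (v' x - u' x) ^ 2)
    (hEL : (∫ x in a..b, (α * u' x * (v' x - u' x) + f x (u x) * (v x - u x))) = 0) :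
    (∫ x in a..b, (α / 2 * (v' x) ^ 2 + F x (v x)))
        - (∫ x in a..b, (α / 2 * (u' x) ^ 2 + F x (u x)))
      ≥ c1 / 2 * ∫ x in a..b, (v' x - u' x) ^ 2 :=
  energy_excess_lower_bound_general a b α L0 c0 c1 hab hL0 hH1 F f hF hf hFf hLip u v u' v' hu hu'
    hv hv' hPoincare hEL
end

section
/- Let a < b, α > 0, L0 ≥ 0 be real numbers. Let F, f : ℝ → ℝ → ℝ be continuous with ∀ x s, HasDerivAt (F x) (f x s) s, and |f x s - f x t| ≤ L0·|s - t| for all x, s, t. Let u, v : ℝ → ℝ be continuously differentiable on [a,b], set w = v - u, and define E(φ) = ∫_a^b (α/2·φ'(x)² + F(x, φ(x))) dx. Assume the Euler–Lagrange relation ∫_a^b (α·u'(x)·w'(x) + f(x, u(x))·w(x)) dx = 0. Then E(v) - E(u) ≤ (α/2)·∫_a^b w'(x)² dx + (L0/2)·∫_a^b w(x)² dx. -/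
/-!
Subtracting the Euler–Lagrange relation, `E(v) - E(u)` becomes `∫ α/2·w'²` plus the integral of
the first-order Taylor remainder `F(x, v) - F(x, u) - f(x, u)·w` of `F(x, ·)` at `u(x)`. Since
`f(x, ·) = ∂ₛF(x, ·)` is `L0`-Lipschitz, that remainder is at most `L0/2·w²`.
-/

open Set MeasureTheory

lemma taylor_remainder_le_of_lipschitz_deriv {F f : ℝ → ℝ} {L : ℝ}
    (hFf : ∀ s, HasDerivAt F (f s) s) (hf : ∀ s t, |f s - f t| ≤ L * |s - t|) (s₀ s : ℝ) :
    F s - F s₀ - f s₀ * (s - s₀) ≤ L / 2 * (s - s₀) ^ 2 := by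
  -- `g` vanishes at `s₀`, and the Lipschitz bound makes `g' t = f t - f s₀ - L (t - s₀)` have
  -- the sign of `s₀ - t`, so `g` is maximal at `s₀`.
  set g : ℝ → ℝ := fun t ↦ F t - F s₀ - f s₀ * (t - s₀) - L / 2 * (t - s₀) ^ 2
  have hg : ∀ t, HasDerivAt g (f t - f s₀ - L * (t - s₀)) t := fun t ↦ by
    have hlin : HasDerivAt (fun t ↦ t - s₀) 1 t := (hasDerivAt_id' t).sub_const s₀
    exact ((((hFf t).sub_const (F s₀)).sub (hlin.const_mul (f s₀))).sub
      ((hlin.fun_pow 2).const_mul (L / 2))).congr_deriv (by ring)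
  have hgc : Continuous g := continuous_iff_continuousAt.2 fun t ↦ (hg t).continuousAt
  suffices g s ≤ g s₀ by simpa [g] using this
  rcases le_total s₀ s with hs | hs
  · refine antitoneOn_of_hasDerivWithinAt_nonpos (convex_Ici s₀) hgc.continuousOn
      (fun t _ ↦ (hg t).hasDerivWithinAt) (fun t ht ↦ ?_) self_mem_Ici hs hs
    rw [interior_Ici, mem_Ioi] at ht
    have := (abs_le.1 (hf t s₀)).2
    rw [abs_of_pos (sub_pos.2 ht)] at this
    linarith
  · refine monotoneOn_of_hasDerivWithinAt_nonneg (convex_Iic s₀) hgc.continuousOn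
      (fun t _ ↦ (hg t).hasDerivWithinAt) (fun t ht ↦ ?_) hs self_mem_Iic hs
    rw [interior_Iic, mem_Iio] at ht
    have := (abs_le.1 (hf t s₀)).1
    rw [abs_of_neg (sub_neg.2 ht)] at this
    linarith

lemma Continuous.continuousOn_comp_graph {X Y Z : Type*} [TopologicalSpace X]
    [TopologicalSpace Y] [TopologicalSpace Z] {G : X → Y → Z} (hG : Continuous (Function.uncurry G))
    {u : X → Y} {s : Set X} (hu : ContinuousOn u s) : ContinuousOn (fun x ↦ G x (u x)) s :=
  hG.comp_continuousOn (continuousOn_id.prodMk hu)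

theorem energy_excess_upper_bound_general
    (a b α L0 : ℝ) (hab : a < b)
    (F f : ℝ → ℝ → ℝ)
    (hF : Continuous (Function.uncurry F)) (hf : Continuous (Function.uncurry f))
    (hFf : ∀ x s, HasDerivAt (F x) (f x s) s)
    (hLip : ∀ x s t, |f x s - f x t| ≤ L0 * |s - t|)
    (u v u' v' : ℝ → ℝ)
    (hu : ∀ x ∈ Set.Icc a b, HasDerivWithinAt u (u' x) (Set.Icc a b) x)
    (hu' : ContinuousOn u' (Set.Icc a b))
    (hv : ∀ x ∈ Set.Icc a b, HasDerivWithinAt v (v' x) (Set.Icc a b) x)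
    (hv' : ContinuousOn v' (Set.Icc a b))
    (hEL : (∫ x in a..b, (α * u' x * (v' x - u' x) + f x (u x) * (v x - u x))) = 0) :
    (∫ x in a..b, (α / 2 * (v' x) ^ 2 + F x (v x)))
        - (∫ x in a..b, (α / 2 * (u' x) ^ 2 + F x (u x)))
      ≤ α / 2 * (∫ x in a..b, (v' x - u' x) ^ 2)
        + L0 / 2 * ∫ x in a..b, (v x - u x) ^ 2 := by
  have hcu : ContinuousOn u (Icc a b) := fun x hx ↦ (hu x hx).continuousWithinAt
  have hcv : ContinuousOn v (Icc a b) := fun x hx ↦ (hv x hx).continuousWithinAt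
  have hEv : IntervalIntegrable (fun x ↦ α / 2 * v' x ^ 2 + F x (v x)) volume a b :=
    ((continuousOn_const.mul (hv'.pow 2)).add
      (hF.continuousOn_comp_graph hcv)).intervalIntegrable_of_Icc hab.le
  have hEu : IntervalIntegrable (fun x ↦ α / 2 * u' x ^ 2 + F x (u x)) volume a b :=
    ((continuousOn_const.mul (hu'.pow 2)).add
      (hF.continuousOn_comp_graph hcu)).intervalIntegrable_of_Icc hab.le
  have hEL_int : IntervalIntegrable
      (fun x ↦ α * u' x * (v' x - u' x) + f x (u x) * (v x - u x)) volume a b :=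
    (((continuousOn_const.mul hu').mul (hv'.sub hu')).add
      ((hf.continuousOn_comp_graph hcu).mul (hcv.sub hcu))).intervalIntegrable_of_Icc hab.le
  have hw' : IntervalIntegrable (fun x ↦ (v' x - u' x) ^ 2) volume a b :=
    ((hv'.sub hu').pow 2).intervalIntegrable_of_Icc hab.le
  have hw : IntervalIntegrable (fun x ↦ (v x - u x) ^ 2) volume a b :=
    ((hcv.sub hcu).pow 2).intervalIntegrable_of_Icc hab.le
  calc (∫ x in a..b, (α / 2 * v' x ^ 2 + F x (v x))) - ∫ x in a..b, (α / 2 * u' x ^ 2 + F x (u x))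
      = ∫ x in a..b, ((α / 2 * v' x ^ 2 + F x (v x)) - (α / 2 * u' x ^ 2 + F x (u x))
          - (α * u' x * (v' x - u' x) + f x (u x) * (v x - u x))) := by
        rw [intervalIntegral.integral_sub (hEv.sub hEu) hEL_int, hEL, sub_zero,
          intervalIntegral.integral_sub hEv hEu]
    _ ≤ ∫ x in a..b, (α / 2 * (v' x - u' x) ^ 2 + L0 / 2 * (v x - u x) ^ 2) := by
        refine intervalIntegral.integral_mono_on hab.le ((hEv.sub hEu).sub hEL_int)
          ((hw'.const_mul _).add (hw.const_mul _)) fun x _ ↦ ?_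
        linear_combination taylor_remainder_le_of_lipschitz_deriv (hFf x) (hLip x) (u x) (v x)
    _ = α / 2 * (∫ x in a..b, (v' x - u' x) ^ 2) + L0 / 2 * ∫ x in a..b, (v x - u x) ^ 2 := by
        rw [intervalIntegral.integral_add (hw'.const_mul _) (hw.const_mul _),
          intervalIntegral.integral_const_mul, intervalIntegral.integral_const_mul]

/-- **Upper bound in the proof of Theorem 4.3.** If `u` satisfies the Euler–Lagrange
relation of the energy `E(φ) = ∫_a^b (α/2·(φ')² + F(x,φ)) dx` tested against `w = v - u`,
then `E(v) - E(u) ≤ (α/2)·∫_a^b (w')² dx + (L₀/2)·∫_a^b w² dx`. -/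
theorem energy_excess_upper_bound
    (a b α L0 : ℝ) (hab : a < b) (hα : 0 < α) (hL0 : 0 ≤ L0)
    (F f : ℝ → ℝ → ℝ)
    (hF : Continuous (Function.uncurry F)) (hf : Continuous (Function.uncurry f))
    (hFf : ∀ x s, HasDerivAt (F x) (f x s) s)
    (hLip : ∀ x s t, |f x s - f x t| ≤ L0 * |s - t|)
    (u v u' v' : ℝ → ℝ)
    (hu : ∀ x ∈ Set.Icc a b, HasDerivWithinAt u (u' x) (Set.Icc a b) x)
    (hu' : ContinuousOn u' (Set.Icc a b))
    (hv : ∀ x ∈ Set.Icc a b, HasDerivWithinAt v (v' x) (Set.Icc a b) x)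
    (hv' : ContinuousOn v' (Set.Icc a b))
    (hEL : (∫ x in a..b, (α * u' x * (v' x - u' x) + f x (u x) * (v x - u x))) = 0) :
    (∫ x in a..b, (α / 2 * (v' x) ^ 2 + F x (v x)))
        - (∫ x in a..b, (α / 2 * (u' x) ^ 2 + F x (u x)))
      ≤ α / 2 * (∫ x in a..b, (v' x - u' x) ^ 2)
        + L0 / 2 * ∫ x in a..b, (v x - u x) ^ 2 :=
  energy_excess_upper_bound_general a b α L0 hab F f hF hf hFf hLip u v u' v' hu hu' hv hv' hEL
end

section
/- Let a < b, α > 0, L0 ≥ 0, c0 ≥ 0, c1 > 0 be real numbers with α - L0·c0² ≥ c1. Let f : ℝ → ℝ → ℝ be continuous with |f x s - f x t| ≤ L0·|s - t| for all x, s, t. Let u, v : ℝ → ℝ be continuously differentiable on [a,b] with u(a) = v(a), set w = u - v, and assume the Poincaré inequality ∫_a^b w(x)² dx ≤ c0²·∫_a^b w'(x)² dx. If both u and v satisfy the weak Euler–Lagrange equation tested against w, i.e., ∫_a^b (α·u'(x)·w'(x) + f(x, u(x))·w(x)) dx = 0 and ∫_a^b (α·v'(x)·w'(x) + f(x, v(x))·w(x))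 dx = 0, then u(x) = v(x) for all x ∈ [a,b]. -/
/-!
Subtracting the two Euler–Lagrange identities gives, for `w = u - v`,
`α ∫ w'² = -∫ (f(·, u) - f(·, v)) w ≤ L0 ∫ w² ≤ L0 c0² ∫ w'²`, by the Lipschitz bound and then
the Poincaré inequality. Under (H1) this forces `∫ w'² = 0`, hence `∫ w² = 0`, and the
continuous function `w` vanishes on `[a, b]`.
-/

open MeasureTheory Set

lemma neg_mul_sq_le_mul_of_abs_le {p q L : ℝ} (h : |p| ≤ L * |q|) : -(L * q ^ 2) ≤ p * q := by
  calc -(L * q ^ 2) = -(L * |q| * |q|) := by rw [mul_assoc, abs_mul_abs_self, sq]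
    _ ≤ -(|p| * |q|) := neg_le_neg (mul_le_mul_of_nonneg_right h (abs_nonneg q))
    _ = -|p * q| := by rw [abs_mul]
    _ ≤ p * q := neg_abs_le _

lemma eq_zero_on_Icc_of_integral_sq_eq_zero {a b : ℝ} {g : ℝ → ℝ} (hab : a < b)
    (hg : ContinuousOn g (Icc a b)) (h : ∫ x in a..b, g x ^ 2 = 0) :
    ∀ x ∈ Icc a b, g x = 0 := by
  by_contra! ⟨c, hc, hgc⟩
  have hpos : 0 < ∫ x in a..b, g x ^ 2 :=
    intervalIntegral.integral_pos hab (hg.pow 2) (fun x _ => sq_nonneg (g x))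
      ⟨c, hc, by positivity⟩
  exact hpos.ne' h

lemma mul_integral_sq_deriv_sub_le_of_weak_euler_lagrange {a b α L0 : ℝ} {f : ℝ → ℝ → ℝ}
    {u v u' v' : ℝ → ℝ} (hab : a ≤ b) (hf : Continuous (Function.uncurry f))
    (hLip : ∀ x s t, |f x s - f x t| ≤ L0 * |s - t|)
    (hu : ContinuousOn u (Icc a b)) (hv : ContinuousOn v (Icc a b))
    (hu' : ContinuousOn u' (Icc a b)) (hv' : ContinuousOn v' (Icc a b))
    (hELu : (∫ x in a..b, (α * u' x * (u' x - v' x) + f x (u x) * (u x - v x))) = 0)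
    (hELv : (∫ x in a..b, (α * v' x * (u' x - v' x) + f x (v x) * (u x - v x))) = 0) :
    α * ∫ x in a..b, (u' x - v' x) ^ 2 ≤ L0 * ∫ x in a..b, (u x - v x) ^ 2 := by
  have hfu : ContinuousOn (fun x => f x (u x)) (Icc a b) :=
    hf.comp_continuousOn (continuousOn_id.prodMk hu)
  have hfv : ContinuousOn (fun x => f x (v x)) (Icc a b) :=
    hf.comp_continuousOn (continuousOn_id.prodMk hv)
  have hint : ∀ {g : ℝ → ℝ}, ContinuousOn g (Icc a b) → IntervalIntegrable g volume a b :=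
    fun hg => hg.intervalIntegrable_of_Icc hab
  have hw := hu.sub hv
  have hw' := hu'.sub hv'
  have hIw : IntervalIntegrable (fun x => (u x - v x) ^ 2) volume a b := hint (hw.pow 2)
  have hIw' : IntervalIntegrable (fun x => (u' x - v' x) ^ 2) volume a b := hint (hw'.pow 2)
  have hIELu : IntervalIntegrable
      (fun x => α * u' x * (u' x - v' x) + f x (u x) * (u x - v x)) volume a b :=
    hint ((continuousOn_const.mul hu').mul hw' |>.add (hfu.mul hw))
  have hIELv : IntervalIntegrable
      (fun x => α * v' x * (u' x - v' x) + f x (v x) * (u x - v x)) volume a b :=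
    hint ((continuousOn_const.mul hv').mul hw' |>.add (hfv.mul hw))
  have hpointwise : ∀ x ∈ Icc a b, α * (u' x - v' x) ^ 2 - L0 * (u x - v x) ^ 2 ≤
      (α * u' x * (u' x - v' x) + f x (u x) * (u x - v x)) -
        (α * v' x * (u' x - v' x) + f x (v x) * (u x - v x)) := by
    intro x _
    have := neg_mul_sq_le_mul_of_abs_le (hLip x (u x) (v x))
    linarith
  have hmono := intervalIntegral.integral_mono_on hab
    ((hIw'.const_mul α).sub (hIw.const_mul L0)) (hIELu.sub hIELv) hpointwise
  rw [intervalIntegral.integral_sub (hIw'.const_mul α) (hIw.const_mul L0),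
    intervalIntegral.integral_const_mul, intervalIntegral.integral_const_mul,
    intervalIntegral.integral_sub hIELu hIELv, hELu, hELv] at hmono
  linarith

theorem stationary_solution_unique_general
    (a b α L0 c0 c1 : ℝ) (hab : a < b) (hL0 : 0 ≤ L0)
    (hc1 : 0 < c1) (hH1 : c1 ≤ α - L0 * c0 ^ 2)
    (f : ℝ → ℝ → ℝ) (hf : Continuous (Function.uncurry f))
    (hLip : ∀ x s t, |f x s - f x t| ≤ L0 * |s - t|)
    (u v u' v' : ℝ → ℝ)
    (hu : ∀ x ∈ Set.Icc a b, HasDerivWithinAt u (u' x) (Set.Icc a b) x)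
    (hu' : ContinuousOn u' (Set.Icc a b))
    (hv : ∀ x ∈ Set.Icc a b, HasDerivWithinAt v (v' x) (Set.Icc a b) x)
    (hv' : ContinuousOn v' (Set.Icc a b))
    (hPoincare : ∫ x in a..b, (u x - v x) ^ 2 ≤ c0 ^ 2 * ∫ x in a..b, (u' x - v' x) ^ 2)
    (hELu : (∫ x in a..b, (α * u' x * (u' x - v' x) + f x (u x) * (u x - v x))) = 0)
    (hELv : (∫ x in a..b, (α * v' x * (u' x - v' x) + f x (v x) * (u x - v x))) = 0) :
    ∀ x ∈ Set.Icc a b, u x = v x := by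
  have hucont : ContinuousOn u (Icc a b) := fun x hx => (hu x hx).continuousWithinAt
  have hvcont : ContinuousOn v (Icc a b) := fun x hx => (hv x hx).continuousWithinAt
  have henergy := mul_integral_sq_deriv_sub_le_of_weak_euler_lagrange hab.le hf hLip
    hucont hvcont hu' hv' hELu hELv
  have hI0 : 0 ≤ ∫ x in a..b, (u x - v x) ^ 2 :=
    intervalIntegral.integral_nonneg hab.le fun x _ => sq_nonneg _
  have hI1 : 0 ≤ ∫ x in a..b, (u' x - v' x) ^ 2 :=
    intervalIntegral.integral_nonneg hab.le fun x _ => sq_nonneg _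
  have hPoincareL0 := mul_le_mul_of_nonneg_left hPoincare hL0
  have hcoercive := mul_le_mul_of_nonneg_right hH1 hI1
  have hw0 : ∫ x in a..b, (u x - v x) ^ 2 = 0 := by nlinarith
  intro x hx
  exact sub_eq_zero.mp (eq_zero_on_Icc_of_integral_sq_eq_zero hab (hucont.sub hvcont) hw0 x hx)

/-- **Uniqueness of the stationary solution under (H1).** If `u` and `v` are continuously
differentiable on `[a,b]`, agree at `a`, the difference `w = u - v` satisfies the Poincaré
inequality with constant `c₀`, `α - L₀c₀² ≥ c₁ > 0`, and both `u` and `v` satisfy the weak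
Euler–Lagrange equation tested against `w`, then `u = v` on `[a,b]`. -/
theorem stationary_solution_unique
    (a b α L0 c0 c1 : ℝ) (hab : a < b) (hα : 0 < α) (hL0 : 0 ≤ L0) (hc0 : 0 ≤ c0)
    (hc1 : 0 < c1) (hH1 : c1 ≤ α - L0 * c0 ^ 2)
    (f : ℝ → ℝ → ℝ) (hf : Continuous (Function.uncurry f))
    (hLip : ∀ x s t, |f x s - f x t| ≤ L0 * |s - t|)
    (u v u' v' : ℝ → ℝ)
    (hu : ∀ x ∈ Set.Icc a b, HasDerivWithinAt u (u' x) (Set.Icc a b) x)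
    (hu' : ContinuousOn u' (Set.Icc a b))
    (hv : ∀ x ∈ Set.Icc a b, HasDerivWithinAt v (v' x) (Set.Icc a b) x)
    (hv' : ContinuousOn v' (Set.Icc a b))
    (hbc : u a = v a)
    (hPoincare : ∫ x in a..b, (u x - v x) ^ 2 ≤ c0 ^ 2 * ∫ x in a..b, (u' x - v' x) ^ 2)
    (hELu : (∫ x in a..b, (α * u' x * (u' x - v' x) + f x (u x) * (u x - v x))) = 0)
    (hELv : (∫ x in a..b, (α * v' x * (u' x - v' x) + f x (v x) * (u x - v x))) = 0) :
    ∀ x ∈ Set.Icc a b, u x = v x :=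
  stationary_solution_unique_general a b α L0 c0 c1 hab hL0 hc1 hH1 f hf hLip u v u' v' hu hu' hv
    hv' hPoincare hELu hELv
end

section
/- Let a < b, α > 0, L0 ≥ 0, c0 ≥ 0, c1 > 0 be real numbers with α - L0·c0² ≥ c1. Let F, f : ℝ → ℝ → ℝ be continuous with ∀ x s, HasDerivAt (F x) (f x s) s, and |f x s - f x t| ≤ L0·|s - t| for all x, s, t; define E(φ) = ∫_a^b (α/2·φ'(x)² + F(x, φ(x))) dx for φ continuously differentiable on [a,b]. Let u : ℝ → ℝ be continuously differentiable on [a,b], and let S be a set of functions, each continuously differentiable on [a,b], such that for every v ∈ S the difference w = v - u satisfies the Poincaré inequality ∫_a^b w² dx ≤ c0²·∫_a^b (w')² dx and the Euler–Lagrange relation ∫_a^b (α·u'·w' + f(x,u)·w) dx = 0. If u_h ∈ S is a global minimizer of E over S (E(u_h) ≤ E(v) for all v ∈ S), then for every v ∈ S: ∫_a^b ((u - u_h)'(x))² dx ≤ ((α + L0·c0²)/c1)·∫_a^b ((u - v)'(x))² dx. -/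
/-!
Expanding the energy around the stationary solution `u` and using the Euler–Lagrange relation
gives `E(z) - E(u) = α/2 ∫ (u' - z')² + R(z)` with the Taylor remainder
`R(z) = ∫ F(x, z) - F(x, u) - f(x, u) (z - u)`. Since `f` is `L₀`-Lipschitz in `s`,
`|R(z)| ≤ L₀/2 ∫ (z - u)² ≤ L₀c₀²/2 ∫ (u' - z')²` by Poincaré. Hence
`(α - L₀c₀²)/2 ∫ (u' - u_h')² ≤ E(u_h) - E(u) ≤ E(v) - E(u) ≤ (α + L₀c₀²)/2 ∫ (u' - v')²`.
-/

open Set intervalIntegral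

theorem abs_sub_sub_mul_le_of_lipschitz_deriv {G g : ℝ → ℝ} {L : ℝ} (hg : Continuous g)
    (hG : ∀ s, HasDerivAt G (g s) s) (hLip : ∀ s t, |g s - g t| ≤ L * |s - t|) (s t : ℝ) :
    |G s - G t - g t * (s - t)| ≤ L / 2 * (s - t) ^ 2 := by
  set d := s - t
  have hderiv (θ : ℝ) : HasDerivAt (fun θ => G (t + θ * d) - θ * (g t * d))
      ((g (t + θ * d) - g t) * d) θ := by
    have hline : HasDerivAt (fun θ => t + θ * d) d θ := by
      simpa using ((hasDerivAt_id θ).mul_const d).const_add t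
    have h := ((hG _).comp θ hline).sub ((hasDerivAt_id θ).mul_const (g t * d))
    rwa [one_mul, ← sub_mul] at h
  have hftc : ∫ θ in (0 : ℝ)..1, (g (t + θ * d) - g t) * d = G s - G t - g t * d := by
    rw [integral_eq_sub_of_hasDerivAt (fun θ _ => hderiv θ)
      ((by fun_prop : Continuous _).intervalIntegrable _ _)]
    simp only [one_mul, zero_mul, add_zero, d, add_sub_cancel]
    ring
  rw [← hftc, ← Real.norm_eq_abs]
  calc ‖∫ θ in (0 : ℝ)..1, (g (t + θ * d) - g t) * d‖
      ≤ ∫ θ in (0 : ℝ)..1, L * d ^ 2 * θ := by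
        refine norm_integral_le_of_norm_le zero_le_one (.of_forall fun θ hθ => ?_)
          ((by fun_prop : Continuous _).intervalIntegrable _ _)
        calc ‖(g (t + θ * d) - g t) * d‖ = |g (t + θ * d) - g t| * |d| := by
              rw [Real.norm_eq_abs, abs_mul]
          _ ≤ L * |θ * d| * |d| := by
              gcongr
              simpa using hLip (t + θ * d) t
          _ = L * d ^ 2 * θ := by
              rw [abs_mul, abs_of_pos hθ.1, ← sq_abs d]; ring
    _ = L / 2 * d ^ 2 := by
        rw [integral_const_mul, integral_id]; ring

theorem Continuous.comp_continuousOn_graph {F : ℝ → ℝ → ℝ} (hF : Continuous (Function.uncurry F))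
    {φ : ℝ → ℝ} {s : Set ℝ} (hφ : ContinuousOn φ s) : ContinuousOn (fun x => F x (φ x)) s :=
  hF.comp_continuousOn (continuousOn_id.prodMk hφ)

noncomputable def energy (a b α : ℝ) (F : ℝ → ℝ → ℝ) (φ : ℝ → ℝ) : ℝ :=
  ∫ x in a..b, (α / 2 * (derivWithin φ (Icc a b) x) ^ 2 + F x (φ x))

section Energy

variable {a b α L c : ℝ} {F f : ℝ → ℝ → ℝ} {u z : ℝ → ℝ}

theorem energy_sub_energy_eq (hab : a < b) (hF : Continuous (Function.uncurry F))
    (hf : Continuous (Function.uncurry f))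
    (hu : ContDiffOn ℝ 1 u (Icc a b)) (hz : ContDiffOn ℝ 1 z (Icc a b))
    (hEL : ∫ x in a..b, (α * derivWithin u (Icc a b) x
        * (derivWithin z (Icc a b) x - derivWithin u (Icc a b) x) + f x (u x) * (z x - u x)) = 0) :
    energy a b α F z - energy a b α F u =
      α / 2 * (∫ x in a..b, (derivWithin u (Icc a b) x - derivWithin z (Icc a b) x) ^ 2)
        + ∫ x in a..b, (F x (z x) - F x (u x) - f x (u x) * (z x - u x)) := by
  have hu' := hu.continuousOn_derivWithin (uniqueDiffOn_Icc hab) le_rfl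
  have hz' := hz.continuousOn_derivWithin (uniqueDiffOn_Icc hab) le_rfl
  have hFu := hF.comp_continuousOn_graph hu.continuousOn
  have hFz := hF.comp_continuousOn_graph hz.continuousOn
  have hfu := hf.comp_continuousOn_graph hu.continuousOn
  have hu0 := hu.continuousOn
  have hz0 := hz.continuousOn
  have hint {g : ℝ → ℝ} (hg : ContinuousOn g (Icc a b)) :
      IntervalIntegrable g MeasureTheory.volume a b :=
    hg.intervalIntegrable_of_Icc hab.le
  unfold energy
  rw [← integral_sub (hint (by fun_prop)) (hint (by fun_prop))]
  calc _ = ∫ x in a..b, ((α * derivWithin u (Icc a b) x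
        * (derivWithin z (Icc a b) x - derivWithin u (Icc a b) x) + f x (u x) * (z x - u x)) +
        (α / 2 * (derivWithin u (Icc a b) x - derivWithin z (Icc a b) x) ^ 2
        + (F x (z x) - F x (u x) - f x (u x) * (z x - u x)))) :=
        integral_congr fun x _ => by ring
    _ = _ := by
      rw [integral_add (hint (by fun_prop)) (hint (by fun_prop)), hEL, zero_add,
        integral_add (hint (by fun_prop)) (hint (by fun_prop)), integral_const_mul]

theorem abs_integral_sub_sub_mul_le (hab : a ≤ b) (hf : Continuous (Function.uncurry f))
    (hFf : ∀ x s, HasDerivAt (F x) (f x s) s) (hLip : ∀ x s t, |f x s - f x t| ≤ L * |s - t|)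
    (hu : ContinuousOn u (Icc a b)) (hz : ContinuousOn z (Icc a b)) :
    |∫ x in a..b, (F x (z x) - F x (u x) - f x (u x) * (z x - u x))|
      ≤ L / 2 * ∫ x in a..b, (z x - u x) ^ 2 := by
  rw [← Real.norm_eq_abs, ← integral_const_mul]
  refine norm_integral_le_of_norm_le hab (.of_forall fun x _ => ?_)
    (ContinuousOn.intervalIntegrable_of_Icc hab (by fun_prop))
  exact abs_sub_sub_mul_le_of_lipschitz_deriv (hf.comp (Continuous.prodMk_right x)) (hFf x)
    (hLip x) _ _

theorem abs_energy_sub_energy_sub_le (hab : a < b) (hL : 0 ≤ L)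
    (hF : Continuous (Function.uncurry F)) (hf : Continuous (Function.uncurry f))
    (hFf : ∀ x s, HasDerivAt (F x) (f x s) s)
    (hLip : ∀ x s t, |f x s - f x t| ≤ L * |s - t|)
    (hu : ContDiffOn ℝ 1 u (Icc a b)) (hz : ContDiffOn ℝ 1 z (Icc a b))
    (hPoincare : (∫ x in a..b, (z x - u x) ^ 2) ≤ c ^ 2 *
        ∫ x in a..b, (derivWithin z (Icc a b) x - derivWithin u (Icc a b) x) ^ 2)
    (hEL : ∫ x in a..b, (α * derivWithin u (Icc a b) x
        * (derivWithin z (Icc a b) x - derivWithin u (Icc a b) x) + f x (u x) * (z x - u x)) = 0) :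
    |energy a b α F z - energy a b α F u
        - α / 2 * ∫ x in a..b, (derivWithin u (Icc a b) x - derivWithin z (Icc a b) x) ^ 2|
      ≤ L * c ^ 2 / 2 *
          ∫ x in a..b, (derivWithin u (Icc a b) x - derivWithin z (Icc a b) x) ^ 2 := by
  rw [energy_sub_energy_eq hab hF hf hu hz hEL, add_sub_cancel_left]
  calc _ ≤ L / 2 * ∫ x in a..b, (z x - u x) ^ 2 :=
        abs_integral_sub_sub_mul_le hab.le hf hFf hLip hu.continuousOn hz.continuousOn
    _ ≤ L / 2 * (c ^ 2 *
          ∫ x in a..b, (derivWithin z (Icc a b) x - derivWithin u (Icc a b) x) ^ 2) := by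
        gcongr
    _ = _ := by simp_rw [sub_sq_comm (derivWithin z _ _)]; ring

end Energy

theorem global_minimizer_quasi_optimal_general
    (a b α L0 c0 c1 : ℝ) (hab : a < b) (hL0 : 0 ≤ L0)
    (hc1 : 0 < c1) (hH1 : c1 ≤ α - L0 * c0 ^ 2)
    (F f : ℝ → ℝ → ℝ)
    (hF : Continuous (Function.uncurry F)) (hf : Continuous (Function.uncurry f))
    (hFf : ∀ x s, HasDerivAt (F x) (f x s) s)
    (hLip : ∀ x s t, |f x s - f x t| ≤ L0 * |s - t|)
    (u : ℝ → ℝ) (hu : ContDiffOn ℝ 1 u (Set.Icc a b))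
    (S : Set (ℝ → ℝ)) (hS : ∀ v ∈ S, ContDiffOn ℝ 1 v (Set.Icc a b))
    (hPoincare : ∀ v ∈ S,
      (∫ x in a..b, (v x - u x) ^ 2) ≤ c0 ^ 2 *
        ∫ x in a..b,
          (derivWithin v (Set.Icc a b) x - derivWithin u (Set.Icc a b) x) ^ 2)
    (hEL : ∀ v ∈ S,
      (∫ x in a..b,
        (α * derivWithin u (Set.Icc a b) x
            * (derivWithin v (Set.Icc a b) x - derivWithin u (Set.Icc a b) x)
          + f x (u x) * (v x - u x))) = 0)
    (uh : ℝ → ℝ) (huh : uh ∈ S)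
    (hmin : ∀ v ∈ S,
      (∫ x in a..b, (α / 2 * (derivWithin uh (Set.Icc a b) x) ^ 2 + F x (uh x)))
        ≤ ∫ x in a..b, (α / 2 * (derivWithin v (Set.Icc a b) x) ^ 2 + F x (v x))) :
    ∀ v ∈ S,
      (∫ x in a..b, (derivWithin u (Set.Icc a b) x - derivWithin uh (Set.Icc a b) x) ^ 2)
        ≤ (α + L0 * c0 ^ 2) / c1 *
          ∫ x in a..b, (derivWithin u (Set.Icc a b) x - derivWithin v (Set.Icc a b) x) ^ 2 := by
  intro v hv
  have hbound {z} (hz : z ∈ S) := abs_le.mp <| abs_energy_sub_energy_sub_le hab hL0 hF hf hFf hLip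
    hu (hS z hz) (hPoincare z hz) (hEL z hz)
  obtain ⟨huh_lower, -⟩ := hbound huh
  obtain ⟨-, hv_upper⟩ := hbound hv
  have huh_le_v : energy a b α F uh ≤ energy a b α F v := hmin v hv
  have hIuh : 0 ≤ ∫ x in a..b, (derivWithin u (Icc a b) x - derivWithin uh (Icc a b) x) ^ 2 :=
    integral_nonneg hab.le fun x _ => sq_nonneg _
  have hc1_le := mul_le_mul_of_nonneg_right hH1 hIuh
  rw [div_mul_eq_mul_div, le_div_iff₀ hc1]
  linarith

/-- **Quasi-optimality (Theorem 4.3).** Under assumption (H1) (`α - L₀c₀² ≥ c₁ > 0`),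
if every `v` in the discretization set `S` satisfies the Poincaré inequality and the
Euler–Lagrange relation of the stationary solution `u` tested against `v - u`, then a
global minimizer `u_h` of the energy `E(φ) = ∫_a^b (α/2·(φ')² + F(x,φ)) dx` over `S`
approximates `u` in the `H¹`-seminorm up to the factor `(α + L₀c₀²)/c₁` as well as the
best element of `S`. -/
theorem global_minimizer_quasi_optimal
    (a b α L0 c0 c1 : ℝ) (hab : a < b) (hα : 0 < α) (hL0 : 0 ≤ L0) (hc0 : 0 ≤ c0)
    (hc1 : 0 < c1) (hH1 : c1 ≤ α - L0 * c0 ^ 2)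
    (F f : ℝ → ℝ → ℝ)
    (hF : Continuous (Function.uncurry F)) (hf : Continuous (Function.uncurry f))
    (hFf : ∀ x s, HasDerivAt (F x) (f x s) s)
    (hLip : ∀ x s t, |f x s - f x t| ≤ L0 * |s - t|)
    (u : ℝ → ℝ) (hu : ContDiffOn ℝ 1 u (Set.Icc a b))
    (S : Set (ℝ → ℝ)) (hS : ∀ v ∈ S, ContDiffOn ℝ 1 v (Set.Icc a b))
    (hPoincare : ∀ v ∈ S,
      (∫ x in a..b, (v x - u x) ^ 2) ≤ c0 ^ 2 *
        ∫ x in a..b,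
          (derivWithin v (Set.Icc a b) x - derivWithin u (Set.Icc a b) x) ^ 2)
    (hEL : ∀ v ∈ S,
      (∫ x in a..b,
        (α * derivWithin u (Set.Icc a b) x
            * (derivWithin v (Set.Icc a b) x - derivWithin u (Set.Icc a b) x)
          + f x (u x) * (v x - u x))) = 0)
    (uh : ℝ → ℝ) (huh : uh ∈ S)
    (hmin : ∀ v ∈ S,
      (∫ x in a..b, (α / 2 * (derivWithin uh (Set.Icc a b) x) ^ 2 + F x (uh x)))
        ≤ ∫ x in a..b, (α / 2 * (derivWithin v (Set.Icc a b) x) ^ 2 + F x (v x))) :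
    ∀ v ∈ S,
      (∫ x in a..b, (derivWithin u (Set.Icc a b) x - derivWithin uh (Set.Icc a b) x) ^ 2)
        ≤ (α + L0 * c0 ^ 2) / c1 *
          ∫ x in a..b, (derivWithin u (Set.Icc a b) x - derivWithin v (Set.Icc a b) x) ^ 2 :=
  global_minimizer_quasi_optimal_general a b α L0 c0 c1 hab hL0 hc1 hH1 F f hF hf hFf hLip u hu S hS
    hPoincare hEL uh huh hmin
end

section
/- Let ε > 0 and c ∈ ℝ, and define φ : ℝ → ℝ by φ(x) = tanh((x - c)/(√2·ε)). Then the Allen–Cahn free energy of φ over the whole real line equals 2√2/3: ∫_ℝ (ε/2·φ'(x)² + (1 - φ(x)²)²/(4ε)) dx = 2√2/3. -/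
/-!
The profile solves `ε φ' = (1 - φ²)/√2`, so the gradient and potential terms of the energy
density are equal and the density is `sech⁴((x - c)/(√2 ε)) / (2ε)`. After the substitution
`u = (x - c)/(√2 ε)` the energy is `(√2/2) ∫ sech⁴`, and `∫ sech⁴ = 4/3` because
`tanh - tanh³/3` is an antiderivative of `sech⁴ = (1 - tanh²)²` rising from `-2/3` to `2/3`.
-/

open Filter MeasureTheory Set Real Topology

theorem integral_eq_sub_of_hasDerivAt_of_nonneg_of_tendsto {f f' : ℝ → ℝ} {m n : ℝ}
    (hderiv : ∀ x, HasDerivAt f (f' x) x) (hf' : ∀ x, 0 ≤ f' x)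
    (hbot : Tendsto f atBot (𝓝 m)) (htop : Tendsto f atTop (𝓝 n)) :
    ∫ x, f' x = n - m := by
  have hcont : Continuous f := continuous_iff_continuousAt.2 fun x => (hderiv x).continuousAt
  have hint (a : ℝ) : IntegrableOn f' (Ioc (-a) a) :=
    intervalIntegral.integrableOn_deriv_of_nonneg hcont.continuousOn (fun x _ => hderiv x)
      (fun x _ => hf' x)
  have hFTC (a : ℝ) (ha : 0 ≤ a) : ∫ x in Ioc (-a) a, f' x = f a - f (-a) := by
    have hle : -a ≤ a := by linarith
    rw [← intervalIntegral.integral_of_le hle]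
    exact intervalIntegral.integral_eq_sub_of_hasDerivAt (fun x _ => hderiv x)
      ((intervalIntegrable_iff_integrableOn_Ioc_of_le hle).2 (hint a))
  refine (aecover_Ioc tendsto_neg_atTop_atBot tendsto_id).integral_eq_of_tendsto_of_nonneg_ae
    _ (ae_of_all _ hf') hint ?_
  exact (htop.sub (hbot.comp tendsto_neg_atTop_atBot)).congr'
    ((eventually_ge_atTop 0).mono fun a ha => (hFTC a ha).symm)

theorem integral_comp_sub_div {E : Type*} [NormedAddCommGroup E] [NormedSpace ℝ E]
    (g : ℝ → E) (c k : ℝ) : ∫ x, g ((x - c) / k) = |k| • ∫ x, g x := by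
  rw [integral_sub_right_eq_self (fun x => g (x / k)) c, Measure.integral_comp_div]

namespace Real

theorem hasDerivAt_tanh (x : ℝ) : HasDerivAt tanh (1 - tanh x ^ 2) x := by
  have h := (hasDerivAt_sinh x).div (hasDerivAt_cosh x) (cosh_pos x).ne'
  rw [show sinh / cosh = tanh from funext fun y => (tanh_eq_sinh_div_cosh y).symm] at h
  refine h.congr_deriv ?_
  rw [tanh_eq_sinh_div_cosh, div_pow, one_sub_div (pow_ne_zero 2 (cosh_pos x).ne')]
  ring

theorem tanh_eq_one_sub_exp_div_one_add_exp (x : ℝ) :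
    tanh x = (1 - exp (-(2 * x))) / (1 + exp (-(2 * x))) := by
  rw [tanh_eq, show -(2 * x) = -x + -x by ring, exp_add, exp_neg]
  field_simp

theorem tendsto_tanh_atTop : Tendsto tanh atTop (𝓝 1) := by
  have he : Tendsto (fun x => exp (-(2 * x))) atTop (𝓝 0) :=
    tendsto_exp_comp_nhds_zero.2 <|
      tendsto_neg_atTop_atBot.comp (tendsto_id.const_mul_atTop two_pos)
  have h := (tendsto_const_nhds (x := (1 : ℝ))).sub he |>.div
    ((tendsto_const_nhds (x := (1 : ℝ))).add he) (by norm_num)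
  rw [sub_zero, add_zero, div_one] at h
  exact h.congr fun x => (tanh_eq_one_sub_exp_div_one_add_exp x).symm

theorem tendsto_tanh_atBot : Tendsto tanh atBot (𝓝 (-1)) := by
  convert (tendsto_tanh_atTop.comp tendsto_neg_atBot_atTop).neg using 1
  ext x
  simp

end Real

theorem hasDerivAt_tanh_sub_tanh_pow_three_div_three (x : ℝ) :
    HasDerivAt (fun y => tanh y - tanh y ^ 3 / 3) ((1 - tanh x ^ 2) ^ 2) x := by
  refine ((hasDerivAt_tanh x).sub (((hasDerivAt_tanh x).pow 3).div_const 3)).congr_deriv ?_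
  ring

theorem integral_one_sub_tanh_sq_sq : ∫ x, (1 - tanh x ^ 2) ^ 2 = 4 / 3 := by
  have hlim {l : Filter ℝ} {s : ℝ} (h : Tendsto tanh l (𝓝 s)) :
      Tendsto (fun y => tanh y - tanh y ^ 3 / 3) l (𝓝 (s - s ^ 3 / 3)) :=
    h.sub ((h.pow 3).div_const 3)
  rw [integral_eq_sub_of_hasDerivAt_of_nonneg_of_tendsto
    hasDerivAt_tanh_sub_tanh_pow_three_div_three (fun x => by positivity)
    (hlim tendsto_tanh_atBot) (hlim tendsto_tanh_atTop)]
  norm_num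

theorem hasDerivAt_tanh_sub_div (c k x : ℝ) :
    HasDerivAt (fun y => tanh ((y - c) / k)) ((1 - tanh ((x - c) / k) ^ 2) / k) x := by
  refine ((hasDerivAt_tanh _).comp x (((hasDerivAt_id x).sub_const c).div_const k)).congr_deriv ?_
  simp [div_eq_mul_inv]

theorem allenCahn_energyDensity_tanh_profile {ε : ℝ} (hε : 0 < ε) (c x : ℝ) :
    ε / 2 * deriv (fun y => tanh ((y - c) / (√2 * ε))) x ^ 2
        + (1 - tanh ((x - c) / (√2 * ε)) ^ 2) ^ 2 / (4 * ε)
      = (1 - tanh ((x - c) / (√2 * ε)) ^ 2) ^ 2 / (2 * ε) := by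
  rw [(hasDerivAt_tanh_sub_div c _ x).deriv, div_pow, mul_pow, sq_sqrt zero_le_two]
  field_simp
  ring

/-- The Allen–Cahn free energy of the stationary tanh profile
`φ(x) = tanh((x - c)/(√2·ε))` over the whole real line equals `2√2/3`. -/
theorem tanh_profile_allen_cahn_energy
    (ε : ℝ) (hε : 0 < ε) (c : ℝ) :
    (∫ x : ℝ,
        (ε / 2 * (deriv (fun y : ℝ => Real.tanh ((y - c) / (Real.sqrt 2 * ε))) x) ^ 2
          + (1 - (Real.tanh ((x - c) / (Real.sqrt 2 * ε))) ^ 2) ^ 2 / (4 * ε)))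
      = 2 * Real.sqrt 2 / 3 := by
  simp_rw [allenCahn_energyDensity_tanh_profile hε c]
  rw [integral_div, integral_comp_sub_div (fun u => (1 - tanh u ^ 2) ^ 2),
    integral_one_sub_tanh_sq_sq, abs_of_pos (by positivity), smul_eq_mul]
  field_simp
  ring
end
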